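/- For all k, ℓ ∈ ℤ² ∖ {(0,0)}, with a = (k₂ℓ₁ − k₁ℓ₂)/(|k||ℓ|), one has 𝒥^{0,1}_{k,ℓ}(x) − 𝒥^{0,1}_{ℓ,k}(x) = a·cos((k−ℓ)·x)·(−(k₂ + ℓ₂), k₁ + ℓ₁) for all x ∈ ℝ²; moreover, if k ≠ ℓ then ⟨𝒥^{0,1}_{k,ℓ} − 𝒥^{0,1}_{ℓ,k}, e^0_{k−ℓ}⟩_{L²} = 2π²·a·(|ℓ|² − |k|²)/|k−ℓ|. -/

import Mathlib

/-- Euclidean norm of an integer vector. -/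
noncomputable def znorm (k : ℤ × ℤ) : ℝ := Real.sqrt ((k.1 : ℝ) ^ 2 + (k.2 : ℝ) ^ 2)

/-- The pairing `k · x = k₁x₁ + k₂x₂`. -/
noncomputable def kdot (k : ℤ × ℤ) (x : ℝ × ℝ) : ℝ := (k.1 : ℝ) * x.1 + (k.2 : ℝ) * x.2

/-- The vector field `e_k^0(x) = (k₂/|k|, −k₁/|k|)·cos(k·x)`. -/
noncomputable def e0 (k : ℤ × ℤ) : ℝ × ℝ → ℝ × ℝ := fun x =>
  (((k.2 : ℝ) / znorm k) * Real.cos (kdot k x), (-(k.1 : ℝ) / znorm k) * Real.cos (kdot k x))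

/-- The vector field `e_k^1(x) = (−k₂/|k|, k₁/|k|)·sin(k·x)`. -/
noncomputable def e1 (k : ℤ × ℤ) : ℝ × ℝ → ℝ × ℝ := fun x =>
  ((-(k.2 : ℝ) / znorm k) * Real.sin (kdot k x), ((k.1 : ℝ) / znorm k) * Real.sin (kdot k x))

/-- The advection `b(u,v) = (u·∇)v`, i.e. the derivative of `v` in the direction `u`. -/
noncomputable def adv (u v : ℝ × ℝ → ℝ × ℝ) : ℝ × ℝ → ℝ × ℝ := fun x => fderiv ℝ v x (u x)

/-- The `L²` pairing `⟨f,g⟩ = ∫_{[−π,π]²} f(x)·g(x) dx`. -/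
noncomputable def pairL2 (f g : ℝ × ℝ → ℝ × ℝ) : ℝ :=
  ∫ x in Set.Icc ((-Real.pi, -Real.pi) : ℝ × ℝ) ((Real.pi, Real.pi) : ℝ × ℝ),
    ((f x).1 * (g x).1 + (f x).2 * (g x).2)

/-- `𝒥^{0,1}_{k,ℓ} = b(e_k^0, e_ℓ^1) + b(e_ℓ^1, e_k^0)`. -/
noncomputable def J01 (k l : ℤ × ℤ) : ℝ × ℝ → ℝ × ℝ := fun x =>
  adv (e0 k) (e1 l) x + adv (e1 l) (e0 k) x

/-- `𝒥^{0,0}_{k,ℓ} = b(e_k^0, e_ℓ^0) + b(e_ℓ^0, e_k^0)`. -/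
noncomputable def J00 (k l : ℤ × ℤ) : ℝ × ℝ → ℝ × ℝ := fun x =>
  adv (e0 k) (e0 l) x + adv (e0 l) (e0 k) x

/-- `𝒥^{1,1}_{k,ℓ} = b(e_k^1, e_ℓ^1) + b(e_ℓ^1, e_k^1)`. -/
noncomputable def J11 (k l : ℤ × ℤ) : ℝ × ℝ → ℝ × ℝ := fun x =>
  adv (e1 k) (e1 l) x + adv (e1 l) (e1 k) x

/-- `𝒵^{0,1}_{k,ℓ} = b(e_k^0, e_ℓ^1) − b(e_ℓ^1, e_k^0)`. -/
noncomputable def Z01 (k l : ℤ × ℤ) : ℝ × ℝ → ℝ × ℝ := fun x =>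
  adv (e0 k) (e1 l) x - adv (e1 l) (e0 k) x

/-- `𝒵^{0,0}_{k,ℓ} = b(e_k^0, e_ℓ^0) − b(e_ℓ^0, e_k^0)`. -/
noncomputable def Z00 (k l : ℤ × ℤ) : ℝ × ℝ → ℝ × ℝ := fun x =>
  adv (e0 k) (e0 l) x - adv (e0 l) (e0 k) x

/-- `𝒵^{1,1}_{k,ℓ} = b(e_k^1, e_ℓ^1) − b(e_ℓ^1, e_k^1)`. -/
noncomputable def Z11 (k l : ℤ × ℤ) : ℝ × ℝ → ℝ × ℝ := fun x =>
  adv (e1 k) (e1 l) x - adv (e1 l) (e1 k) x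


section Aux

private noncomputable def Lmap (k : ℤ × ℤ) : ℝ × ℝ →L[ℝ] ℝ :=
  (k.1 : ℝ) • ContinuousLinearMap.fst ℝ ℝ ℝ + (k.2 : ℝ) • ContinuousLinearMap.snd ℝ ℝ ℝ

private lemma hasFDerivAt_kdot (k : ℤ × ℤ) (x : ℝ × ℝ) : HasFDerivAt (kdot k) (Lmap k) x := by
  have h : kdot k = fun y : ℝ × ℝ => Lmap k y := by
    funext y; simp [kdot, Lmap, smul_eq_mul]
  rw [h]; exact (Lmap k).hasFDerivAt

private lemma Lmap_apply (k : ℤ × ℤ) (v : ℝ × ℝ) : Lmap k v = kdot k v := by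
  simp [Lmap, kdot, smul_eq_mul]

private lemma adv_e1 (l : ℤ × ℤ) (u : ℝ × ℝ → ℝ × ℝ) (x : ℝ × ℝ) :
    adv u (e1 l) x =
      ((-(l.2 : ℝ) / znorm l) * (Real.cos (kdot l x) * kdot l (u x)),
       ((l.1 : ℝ) / znorm l) * (Real.cos (kdot l x) * kdot l (u x))) := by
  have h1 := ((hasFDerivAt_kdot l x).sin.const_mul ((-(l.2 : ℝ)) / znorm l))
  have h2 := ((hasFDerivAt_kdot l x).sin.const_mul (((l.1 : ℝ)) / znorm l))
  have hD : HasFDerivAt (e1 l) _ x := h1.prodMk h2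
  have h : adv u (e1 l) x = (fderiv ℝ (e1 l) x) (u x) := rfl
  rw [h, hD.fderiv]
  simp [ContinuousLinearMap.prod_apply, Lmap_apply, smul_eq_mul, mul_assoc]

private lemma adv_e0 (k : ℤ × ℤ) (u : ℝ × ℝ → ℝ × ℝ) (x : ℝ × ℝ) :
    adv u (e0 k) x =
      (((k.2 : ℝ) / znorm k) * (-Real.sin (kdot k x) * kdot k (u x)),
       (-(k.1 : ℝ) / znorm k) * (-Real.sin (kdot k x) * kdot k (u x))) := by
  have h1 := ((hasFDerivAt_kdot k x).cos.const_mul (((k.2 : ℝ)) / znorm k))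
  have h2 := ((hasFDerivAt_kdot k x).cos.const_mul ((-(k.1 : ℝ)) / znorm k))
  have hD : HasFDerivAt (e0 k) _ x := h1.prodMk h2
  have h : adv u (e0 k) x = (fderiv ℝ (e0 k) x) (u x) := rfl
  rw [h, hD.fderiv]
  simp [ContinuousLinearMap.prod_apply, Lmap_apply, smul_eq_mul, mul_assoc]

private lemma znorm_pos {k : ℤ × ℤ} (hk : k ≠ (0, 0)) : 0 < znorm k := by
  have h : ¬(k.1 = 0 ∧ k.2 = 0) := by
    intro ⟨h1, h2⟩; exact hk (Prod.ext h1 h2)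
  rcases not_and_or.1 h with h | h
  · have : ((k.1 : ℝ)) ≠ 0 := Int.cast_ne_zero.2 h
    exact Real.sqrt_pos.2 (by positivity)
  · have : ((k.2 : ℝ)) ≠ 0 := Int.cast_ne_zero.2 h
    exact Real.sqrt_pos.2 (by positivity)

private lemma znorm_sq (k : ℤ × ℤ) : znorm k ^ 2 = (k.1 : ℝ) ^ 2 + (k.2 : ℝ) ^ 2 :=
  Real.sq_sqrt (by positivity)

private lemma part1 (k l : ℤ × ℤ) (hk : k ≠ (0, 0)) (hl : l ≠ (0, 0))
    (a : ℝ) (ha : a = ((k.2 : ℝ) * (l.1 : ℝ) - (k.1 : ℝ) * (l.2 : ℝ)) / (znorm k * znorm l))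
    (x : ℝ × ℝ) :
    J01 k l x - J01 l k x =
      (a * Real.cos (kdot (k - l) x) * (-((k.2 : ℝ) + (l.2 : ℝ))),
       a * Real.cos (kdot (k - l) x) * ((k.1 : ℝ) + (l.1 : ℝ))) := by
  have hnk := (znorm_pos hk).ne'
  have hnl := (znorm_pos hl).ne'
  have hsub : kdot (k - l) x = kdot k x - kdot l x := by
    simp [kdot, Prod.fst_sub, Prod.snd_sub]; ring
  have hcos : Real.cos (kdot (k - l) x) =
      Real.cos (kdot k x) * Real.cos (kdot l x) + Real.sin (kdot k x) * Real.sin (kdot l x) := by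
    rw [hsub, Real.cos_sub]
  have h1 : kdot l (e0 k x) =
      ((l.1 : ℝ) * (k.2 : ℝ) - (l.2 : ℝ) * (k.1 : ℝ)) / znorm k * Real.cos (kdot k x) := by
    simp only [kdot, e0]; ring
  have h2 : kdot k (e1 l x) =
      ((k.2 : ℝ) * (l.1 : ℝ) - (k.1 : ℝ) * (l.2 : ℝ)) / znorm l * Real.sin (kdot l x) := by
    simp only [kdot, e1]; ring
  have h3 : kdot k (e0 l x) =
      ((k.1 : ℝ) * (l.2 : ℝ) - (k.2 : ℝ) * (l.1 : ℝ)) / znorm l * Real.cos (kdot l x) := by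
    simp only [kdot, e0]; ring
  have h4 : kdot l (e1 k x) =
      ((l.2 : ℝ) * (k.1 : ℝ) - (l.1 : ℝ) * (k.2 : ℝ)) / znorm k * Real.sin (kdot k x) := by
    simp only [kdot, e1]; ring
  simp only [J01, adv_e0, adv_e1, h1, h2, h3, h4, hcos, ha,
    Prod.mk_sub_mk, Prod.mk_add_mk, Prod.mk.injEq]
  constructor <;> (field_simp; ring)

private lemma cos_sq_int (n : ℤ) (hn : n ≠ 0) (c : ℝ) :
    ∫ t in (-Real.pi)..Real.pi, Real.cos (c + (n : ℝ) * t) ^ 2 = Real.pi := by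
  have hn' : ((n : ℝ)) ≠ 0 := Int.cast_ne_zero.2 hn
  have hF : ∀ t ∈ Set.uIcc (-Real.pi) Real.pi,
      HasDerivAt (fun t : ℝ => t / 2 + Real.sin (2 * c + 2 * (n : ℝ) * t) / (4 * (n : ℝ)))
        (Real.cos (c + (n : ℝ) * t) ^ 2) t := by
    intro t _
    have hid : HasDerivAt (fun t : ℝ => t / 2) (1 / 2) t := (hasDerivAt_id t).div_const 2
    have hlin : HasDerivAt (fun t : ℝ => 2 * c + 2 * (n : ℝ) * t) (2 * (n : ℝ)) t := by
      simpa using ((hasDerivAt_id t).const_mul (2 * (n : ℝ))).const_add (2 * c)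
    have hsin := (hlin.sin).div_const (4 * (n : ℝ))
    have h := hid.add hsin
    refine h.congr_deriv ?_
    rw [Real.cos_sq]
    field_simp
    ring_nf
  rw [intervalIntegral.integral_eq_sub_of_hasDerivAt hF (by
    apply Continuous.intervalIntegrable; fun_prop)]
  have h1 : Real.sin (2 * c + 2 * (n : ℝ) * Real.pi) = Real.sin (2 * c) := by
    have h := Real.sin_add_int_mul_two_pi (2 * c) n
    rw [← h]; ring_nf
  have h2 : Real.sin (2 * c + 2 * (n : ℝ) * (-Real.pi)) = Real.sin (2 * c) := by
    have h := Real.sin_add_int_mul_two_pi (2 * c) (-n)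
    rw [← h]; push_cast; ring_nf
  rw [show 2 * c + 2 * (n:ℝ) * -Real.pi = 2 * c + 2 * (n:ℝ) * (-Real.pi) by ring] at *
  rw [h1, h2]
  ring

private lemma double_int (p q : ℤ) (hpq : ¬(p = 0 ∧ q = 0)) :
    ∫ x in (-Real.pi)..Real.pi, ∫ y in (-Real.pi)..Real.pi,
      Real.cos ((p : ℝ) * x + (q : ℝ) * y) ^ 2 = 2 * Real.pi ^ 2 := by
  by_cases hq : q = 0
  · have hp : p ≠ 0 := fun h => hpq ⟨h, hq⟩
    have h : ∀ x : ℝ, (∫ y in (-Real.pi)..Real.pi,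
        Real.cos ((p : ℝ) * x + (q : ℝ) * y) ^ 2) = 2 * Real.pi * Real.cos ((p:ℝ) * x) ^ 2 := by
      intro x
      rw [hq]
      simp only [Int.cast_zero, zero_mul, add_zero, intervalIntegral.integral_const,
        smul_eq_mul]
      ring
    rw [intervalIntegral.integral_congr (fun x _ => h x)]
    rw [show (fun x => 2 * Real.pi * Real.cos ((p:ℝ) * x) ^ 2)
        = (fun x => 2 * Real.pi * Real.cos (0 + (p:ℝ) * x) ^ 2) by funext x; rw [zero_add]]
    rw [intervalIntegral.integral_const_mul, cos_sq_int p hp 0]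
    ring
  · have h : ∀ x : ℝ, (∫ y in (-Real.pi)..Real.pi,
        Real.cos ((p : ℝ) * x + (q : ℝ) * y) ^ 2) = Real.pi := fun x => cos_sq_int q hq _
    rw [intervalIntegral.integral_congr (fun x _ => h x)]
    simp only [intervalIntegral.integral_const, smul_eq_mul]
    ring

private lemma Icc_int (g : ℝ → ℝ) :
    ∫ x in Set.Icc (-Real.pi) Real.pi, g x = ∫ x in (-Real.pi)..Real.pi, g x := by
  rw [intervalIntegral.integral_of_le (by linarith [Real.pi_pos]),
    MeasureTheory.integral_Icc_eq_integral_Ioc]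

end Aux

theorem J01_diff_identity_and_pairing (k l : ℤ × ℤ) (hk : k ≠ (0, 0)) (hl : l ≠ (0, 0))
    (a : ℝ) (ha : a = ((k.2 : ℝ) * (l.1 : ℝ) - (k.1 : ℝ) * (l.2 : ℝ)) / (znorm k * znorm l)) :
    (∀ x : ℝ × ℝ,
      J01 k l x - J01 l k x =
        (a * Real.cos (kdot (k - l) x) * (-((k.2 : ℝ) + (l.2 : ℝ))),
         a * Real.cos (kdot (k - l) x) * ((k.1 : ℝ) + (l.1 : ℝ)))) ∧
    (k ≠ l →
      pairL2 (fun x => J01 k l x - J01 l k x) (e0 (k - l)) =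
        2 * Real.pi ^ 2 * a * ((znorm l) ^ 2 - (znorm k) ^ 2) / znorm (k - l)) := by
  refine ⟨part1 k l hk hl a ha, fun hkl => ?_⟩
  have hm : k - l ≠ (0, 0) := fun h => hkl (sub_eq_zero.mp h)
  have hnm := (znorm_pos hm).ne'
  have hpq : ¬((k - l).1 = 0 ∧ (k - l).2 = 0) := fun ⟨h1, h2⟩ => hm (Prod.ext h1 h2)
  have hpt : ∀ x : ℝ × ℝ,
      (J01 k l x - J01 l k x).1 * (e0 (k - l) x).1 +
        (J01 k l x - J01 l k x).2 * (e0 (k - l) x).2 =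
      (a * ((-((k.2 : ℝ) + (l.2 : ℝ))) * (((k - l).2 : ℝ) / znorm (k - l)) +
        ((k.1 : ℝ) + (l.1 : ℝ)) * (-((k - l).1 : ℝ) / znorm (k - l)))) *
        Real.cos (kdot (k - l) x) ^ 2 := by
    intro x
    rw [part1 k l hk hl a ha x]
    simp only [e0]
    ring
  have hc : Continuous fun x : ℝ × ℝ =>
      (a * ((-((k.2 : ℝ) + (l.2 : ℝ))) * (((k - l).2 : ℝ) / znorm (k - l)) +
        ((k.1 : ℝ) + (l.1 : ℝ)) * (-((k - l).1 : ℝ) / znorm (k - l)))) *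
        Real.cos (kdot (k - l) x) ^ 2 := by
    unfold kdot; fun_prop
  simp only [pairL2, hpt]
  rw [Set.Icc_prod_eq, MeasureTheory.Measure.volume_eq_prod,
    MeasureTheory.setIntegral_prod _ (by
      rw [← MeasureTheory.Measure.volume_eq_prod]
      exact hc.continuousOn.integrableOn_compact (isCompact_Icc.prod isCompact_Icc))]
  simp only [kdot, Icc_int, intervalIntegral.integral_const_mul]
  rw [double_int _ _ hpq]
  rw [znorm_sq k, znorm_sq l]
  simp only [Prod.fst_sub, Prod.snd_sub, Int.cast_sub]
  field_simp
  ring
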